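/- For every integer r ≥ 2, the following identity holds in ℋ: ∇(a b^{r−1}) = Σ_{w ∈ W_r} c^{±}(w) · w, where W_r is the set of words of length r and the integers c^{±}(w) are: c^{±}(a^r) = (−1)^{r+1}(r+1); c^{±}(a^{r−1}b) = (−1)^{r}(r−2); and c^{±}(w) = (−1)^{k(w)+1} j(w) for every other word w of length r, where j(w) is the number of letters a at the beginning of w and k(w) is the total number of occurrences of a in w. -/

import Mathlib

inductive Letter | a | b
deriving DecidableEq

abbrev Word := List Letter

/-- The algebra `ℋ`: formal `ℚ`-linear combinations of words. -/
abbrev H := Word →₀ ℚ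

/-- The list of shuffles of two words (with multiplicity). -/
def shuffleList : Word → Word → List Word
  | [], v => [v]
  | u, [] => [u]
  | x :: u, y :: v =>
      ((shuffleList u (y :: v)).map fun t => x :: t) ++
      ((shuffleList (x :: u) v).map fun t => y :: t)
termination_by u v => u.length + v.length
decreasing_by all_goals simp

/-- The shuffle product `u * v` of two words, as an element of `ℋ`. -/
noncomputable def shW (u v : Word) : H :=
  ((shuffleList u v).map fun t => Finsupp.single t (1 : ℚ)).sum

/-- The shuffle product of a word with an element of `ℋ`, extended linearly. -/
noncomputable def shWH (u : Word) (g : H) : H := g.sum fun v cv => cv • shW u v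

/-- Concatenation of a word with an element of `ℋ`, extended linearly. -/
noncomputable def concatWH (u : Word) (g : H) : H :=
  g.sum fun v c => Finsupp.single (u ++ v) c

/-- The list of all words of length `m`. -/
def wordsOfLength : ℕ → List Word
  | 0 => [[]]
  | n + 1 =>
      ((wordsOfLength n).map fun t => Letter.a :: t) ++
      ((wordsOfLength n).map fun t => Letter.b :: t)

/-- `(a+b)^m`, the `m`-fold concatenation power of `a+b` expanded multilinearly:
the sum of all words of length `m`. -/
noncomputable def abPow (m : ℕ) : H :=
  ((wordsOfLength m).map fun t => Finsupp.single t (1 : ℚ)).sum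

/-- `(b-a)^m`, the `m`-fold concatenation power of `b-a` expanded multilinearly:
the signed sum of all words of length `m`. -/
noncomputable def bmaPow (m : ℕ) : H :=
  ((wordsOfLength m).map fun t =>
    Finsupp.single t ((-1 : ℚ) ^ t.count Letter.a)).sum

/-- Concatenation product on `ℋ`, extended bilinearly from words. -/
noncomputable def concatH (f g : H) : H :=
  f.sum fun u cu => g.sum fun v cv => Finsupp.single (u ++ v) (cu * cv)

/-- `τ(a) = a + b`, `τ(b) = -a`, as elements of `ℋ`. -/
noncomputable def tauL : Letter → H
  | .a => Finsupp.single [Letter.a] 1 + Finsupp.single [Letter.b] 1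
  | .b => - Finsupp.single [Letter.a] 1

/-- `τ(c₁⋯c_n) = τ(c_n)⋯τ(c₁)`, expanded multilinearly with respect to concatenation. -/
noncomputable def tauH : Word → H
  | [] => Finsupp.single [] 1
  | c :: w => concatH (tauH w) (tauL c)

/-- The operator `∇` : `∇(c₁⋯c_n) = Σ_{i=0}^{n} (c₁⋯c_i) * τ(c_{i+1}⋯c_n)`. -/
noncomputable def nablaOp (w : Word) : H :=
  ∑ i ∈ Finset.range (w.length + 1), shWH (w.take i) (tauH (w.drop i))

def isA : Letter → Bool
  | .a => true
  | .b => false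

/-- `j(w)`: the number of letters `a` at the beginning of `w`. -/
def jW (w : Word) : ℕ := (w.takeWhile isA).length

/-- The coefficient `c^±(w)` for a word of length `r`; `k(w)` is the total number of
occurrences of `a` in `w`. -/
def cpmcoef (r : ℕ) (w : Word) : ℤ :=
  if w = List.replicate r Letter.a then (-1) ^ (r + 1) * ((r : ℤ) + 1)
  else if w = List.replicate (r - 1) Letter.a ++ [Letter.b] then (-1) ^ r * ((r : ℤ) - 2)
  else (-1) ^ (w.count Letter.a + 1) * jW w

/-!
For `r = m + 1`, the `i = 0` term of `∇(a b^m)` is `τ(a b^m) = (-1)^m (a^{m+1} + a^m b)`, and for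
`i = j + 1` the term is `(-1)^{m-j} (a b^j) * a^{m-j}`. The shuffle `(a b^n) * a^k` is the sum of
all words with `k + 1` letters `a` and `n` letters `b`, each counted `j(w)` times: the first letter
of `a b^n` can land on any of the leading `a`'s of `w`, and then the rest is forced. So a word `w`
of length `r` with `k(w) ≥ 1` occurs only in the term `j = m + 1 - k(w)`, with coefficient
`(-1)^{k(w)+1} j(w)`; adding `τ(a b^m)` corrects the coefficients of `a^r` and `a^{r-1} b`.
-/

open Letter Finsupp

lemma mem_wordsOfLength {w : Word} {L : ℕ} : w ∈ wordsOfLength L ↔ w.length = L := by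
  induction L generalizing w with
  | zero => cases w <;> simp [wordsOfLength]
  | succ L ih =>
    cases w with
    | nil => simp [wordsOfLength]
    | cons c w => cases c <;> simp [wordsOfLength, ih]

lemma nodup_wordsOfLength (L : ℕ) : (wordsOfLength L).Nodup := by
  induction L with
  | zero => simp [wordsOfLength]
  | succ L ih =>
    refine List.Nodup.append (ih.map fun _ _ h => by injection h)
      (ih.map fun _ _ h => by injection h) ?_
    simp [List.disjoint_left]

lemma eq_replicate_a_of_count_eq_length {w : Word} (h : w.count a = w.length) :
    w = List.replicate w.length a :=
  List.eq_replicate_iff.mpr ⟨rfl, fun c hc => (List.count_eq_length.mp h c hc).symm⟩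

lemma eq_replicate_b_of_count_a_eq_zero {w : Word} (h : w.count a = 0) :
    w = List.replicate w.length b := by
  refine List.eq_replicate_iff.mpr ⟨rfl, fun c hc => ?_⟩
  cases c
  · exact absurd hc (List.count_eq_zero.mp h)
  · rfl

lemma jW_cons_a (w : Word) : jW (a :: w) = jW w + 1 := by
  simp [jW, List.takeWhile_cons, isA]

lemma jW_cons_b (w : Word) : jW (b :: w) = 0 := by
  simp [jW, isA]

lemma jW_replicate_a_append (n : ℕ) (w : Word) : jW (List.replicate n a ++ w) = n + jW w := by
  induction n with
  | zero => simp
  | succ n ih => rw [List.replicate_succ, List.cons_append, jW_cons_a, ih]; omega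

lemma jW_replicate_a (n : ℕ) : jW (List.replicate n a) = n := by
  simpa [jW] using jW_replicate_a_append n []

lemma jW_le_count_a (w : Word) : jW w ≤ w.count a := by
  induction w with
  | nil => simp [jW]
  | cons c w ih => cases c <;> simp [jW_cons_a, jW_cons_b, ih]

lemma jW_eq_zero_of_count_a_eq_zero {w : Word} (h : w.count a = 0) : jW w = 0 :=
  Nat.eq_zero_of_le_zero (h ▸ jW_le_count_a w)

noncomputable def wordSum (L : ℕ) (f : Word → ℚ) : H :=
  ((wordsOfLength L).map fun w => single w (f w)).sum

lemma wordSum_apply (L : ℕ) (f : Word → ℚ) (w : Word) :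
    wordSum L f w = if w.length = L then f w else 0 := by
  classical
  rw [wordSum, ← List.sum_toFinset _ (nodup_wordsOfLength L), finsetSum_apply]
  simp [single_apply, Finset.sum_ite_eq', mem_wordsOfLength]

lemma wordSum_eq_single {L : ℕ} {f : Word → ℚ} (w₀ : Word) (hw₀ : w₀.length = L)
    (hf : ∀ w, w.length = L → w ≠ w₀ → f w = 0) : wordSum L f = single w₀ (f w₀) := by
  ext w
  rw [wordSum_apply, single_apply]
  by_cases hw : w₀ = w
  · simp [← hw, hw₀]
  · rw [if_neg hw]
    split_ifs with hL
    exacts [hf w hL (Ne.symm hw), rfl]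

lemma wordSum_add (L : ℕ) (f g : Word → ℚ) :
    (wordSum L fun w => f w + g w) = wordSum L f + wordSum L g := by
  ext w
  simp only [Finsupp.add_apply, wordSum_apply]
  split_ifs <;> simp

lemma wordSum_zero (L : ℕ) : (wordSum L fun _ => 0) = 0 := by
  ext w
  simp [wordSum_apply]

noncomputable def prependHom (c : Letter) : H →+ H := mapDomain.addMonoidHom (List.cons c)

lemma prependHom_sum_single (c : Letter) (l : List Word) (f : Word → ℚ) :
    prependHom c (l.map fun w => single w (f w)).sum
      = (l.map fun w => single (c :: w) (f w)).sum := by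
  simp [prependHom, map_list_sum, Function.comp_def]

lemma wordSum_succ (L : ℕ) (f : Word → ℚ) :
    wordSum (L + 1) f = prependHom a (wordSum L fun w => f (a :: w))
      + prependHom b (wordSum L fun w => f (b :: w)) := by
  simp only [wordSum, wordsOfLength, prependHom_sum_single, List.map_append, List.sum_append,
    List.map_map, Function.comp_def]

lemma shW_nil_left (v : Word) : shW [] v = single v 1 := by
  cases v <;> simp [shW, shuffleList]

lemma shW_nil_right (u : Word) : shW u [] = single u 1 := by
  cases u <;> simp [shW, shuffleList]

lemma shW_cons_cons (x y : Letter) (u v : Word) :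
    shW (x :: u) (y :: v) = prependHom x (shW u (y :: v)) + prependHom y (shW (x :: u) v) := by
  simp only [shW, shuffleList, prependHom_sum_single, List.map_append, List.sum_append,
    List.map_map, Function.comp_def]

lemma shWH_nil (g : H) : shWH [] g = g := by
  simp [shWH, shW_nil_left, sum_single]

lemma shWH_single (u v : Word) (x : ℚ) : shWH u (single v x) = x • shW u v := by
  simp [shWH]

lemma shW_replicate_b_replicate_a (n m : ℕ) :
    shW (List.replicate n b) (List.replicate m a)
      = wordSum (n + m) fun w => if w.count a = m then 1 else 0 := by
  induction n generalizing m with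
  | zero =>
    rw [List.replicate_zero, shW_nil_left, Nat.zero_add,
      wordSum_eq_single (List.replicate m a) (List.length_replicate ..)]
    · simp
    · rintro w hw hne
      rw [if_neg fun h => hne (hw ▸ eq_replicate_a_of_count_eq_length (h.trans hw.symm))]
  | succ n ihn =>
    induction m with
    | zero =>
      rw [List.replicate_zero, shW_nil_right,
        wordSum_eq_single (List.replicate (n + 1) b) (List.length_replicate ..)]
      · simp [List.count_replicate]
      · rintro w hw hne
        rw [if_neg fun h => hne (hw ▸ eq_replicate_b_of_count_a_eq_zero h)]
    | succ m ihm =>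
      rw [List.replicate_succ, List.replicate_succ, shW_cons_cons, ← List.replicate_succ,
        ← List.replicate_succ, ihn, ihm, show n + 1 + (m + 1) = n + m + 1 + 1 by omega,
        wordSum_succ, add_comm, show n + (m + 1) = n + m + 1 by omega,
        show n + 1 + m = n + m + 1 by omega]
      simp

lemma shW_a_replicate_b_replicate_a (n m : ℕ) :
    shW (a :: List.replicate n b) (List.replicate m a)
      = wordSum (n + m + 1) fun w => if w.count a = m + 1 then (jW w : ℚ) else 0 := by
  induction m with
  | zero =>
    rw [List.replicate_zero, shW_nil_right, wordSum_eq_single (a :: List.replicate n b) (by simp)]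
    · simp [List.count_replicate, jW_cons_a, jW_eq_zero_of_count_a_eq_zero]
    · rintro (_ | ⟨_ | _, w⟩) hw hne
      · simp at hw
      · refine if_neg fun h => hne ?_
        rw [eq_replicate_b_of_count_a_eq_zero (w := w) (by simpa using h),
          (by simpa using hw : w.length = n)]
      · simp [jW_cons_b]
  | succ m ihm =>
    rw [List.replicate_succ, shW_cons_cons, ← List.replicate_succ, ihm,
      shW_replicate_b_replicate_a, ← map_add, show n + (m + 1) = n + m + 1 by omega,
      ← wordSum_add, wordSum_succ (n + m + 1)]
    have hb : (wordSum (n + m + 1) fun w =>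
        if (b :: w).count a = m + 1 + 1 then (jW (b :: w) : ℚ) else 0) = 0 := by
      simp [jW_cons_b, wordSum_zero]
    rw [hb, map_zero, add_zero]
    congr 2
    funext w
    simp only [List.count_cons_self, jW_cons_a, Nat.add_right_cancel_iff]
    split_ifs <;> push_cast <;> ring

lemma concatH_single_single (u v : Word) (x y : ℚ) :
    concatH (single u x) (single v y) = single (u ++ v) (x * y) := by
  simp [concatH]

lemma concatH_add_right (f g₁ g₂ : H) :
    concatH f (g₁ + g₂) = concatH f g₁ + concatH f g₂ := by
  simp only [concatH]
  rw [← sum_add]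
  congr 1
  funext u x
  exact sum_add_index' (by simp) (by simp [mul_add])

lemma tauH_replicate_b (m : ℕ) :
    tauH (List.replicate m b) = single (List.replicate m a) ((-1) ^ m) := by
  induction m with
  | zero => rfl
  | succ m ih =>
    rw [List.replicate_succ, tauH, ih, tauL, ← single_neg, concatH_single_single,
      ← List.replicate_succ', pow_succ]

lemma tauH_a_replicate_b (m : ℕ) :
    tauH (a :: List.replicate m b)
      = single (List.replicate (m + 1) a) ((-1) ^ m)
        + single (List.replicate m a ++ [b]) ((-1) ^ m) := by
  rw [tauH, tauH_replicate_b, tauL, concatH_add_right, concatH_single_single,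
    concatH_single_single, ← List.replicate_succ', mul_one]

lemma shWH_a_replicate_b_tauH_replicate_b (j k : ℕ) :
    shWH (a :: List.replicate j b) (tauH (List.replicate k b))
      = (-1 : ℚ) ^ k • wordSum (j + k + 1)
          fun w => if w.count a = k + 1 then (jW w : ℚ) else 0 := by
  rw [tauH_replicate_b, shWH_single, shW_a_replicate_b_replicate_a]

lemma sum_neg_one_pow_mul_ite_count_a (m : ℕ) (w : Word) (hw : w.count a ≤ m + 1) :
    ∑ j ∈ Finset.range (m + 1),
        (-1 : ℚ) ^ (m - j) * (if w.count a = m - j + 1 then (jW w : ℚ) else 0)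
      = (-1) ^ (w.count a + 1) * jW w := by
  cases hc : w.count a with
  | zero => simp [jW_eq_zero_of_count_a_eq_zero hc]
  | succ c =>
    rw [hc] at hw
    rw [Finset.sum_eq_single_of_mem (m - c) (Finset.mem_range.mpr (by omega)),
      if_pos (by omega), show m - (m - c) = c by omega, pow_succ, pow_succ]
    · ring
    · intro j hj hjc
      rw [if_neg (by simp at hj; omega), mul_zero]

lemma nablaOp_a_replicate_b (m : ℕ) :
    nablaOp (a :: List.replicate m b)
      = tauH (a :: List.replicate m b)
        + wordSum (m + 1) fun w => (-1) ^ (w.count a + 1) * jW w := by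
  have hterm : ∀ j ∈ Finset.range (m + 1),
      shWH ((a :: List.replicate m b).take (j + 1)) (tauH ((a :: List.replicate m b).drop (j + 1)))
        = (-1 : ℚ) ^ (m - j) • wordSum (m + 1)
            fun w => if w.count a = m - j + 1 then (jW w : ℚ) else 0 := by
    intro j hj
    have hjm : j ≤ m := Nat.lt_succ_iff.mp (Finset.mem_range.mp hj)
    rw [List.take_succ_cons, List.drop_succ_cons, List.take_replicate, List.drop_replicate,
      min_eq_left hjm, shWH_a_replicate_b_tauH_replicate_b, show j + (m - j) = m by omega]
  rw [nablaOp, List.length_cons, List.length_replicate, Finset.sum_range_succ', List.take_zero,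
    List.drop_zero, shWH_nil, add_comm, Finset.sum_congr rfl hterm]
  congr 1
  ext w
  simp only [finsetSum_apply, Finsupp.smul_apply, wordSum_apply, smul_eq_mul]
  split_ifs with hw
  · exact sum_neg_one_pow_mul_ite_count_a m w (hw ▸ w.count_le_length)
  · simp

lemma cpmcoef_succ (m : ℕ) (w : Word) :
    (cpmcoef (m + 1) w : ℚ)
      = (if w = List.replicate (m + 1) a then (-1) ^ m else 0)
        + (if w = List.replicate m a ++ [b] then (-1) ^ m else 0)
        + (-1) ^ (w.count a + 1) * jW w := by
  have hne : List.replicate (m + 1) a ≠ List.replicate m a ++ [b] := by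
    rw [List.replicate_succ']
    simp
  rw [cpmcoef, Nat.add_sub_cancel]
  split_ifs with h₁ h₂ h₂
  · exact absurd (h₁.symm.trans h₂) hne
  · rw [h₁, List.count_replicate_self, jW_replicate_a]
    push_cast
    ring
  · have hk : (List.replicate m a ++ [b]).count a = m := by simp
    have hj : jW (List.replicate m a ++ [b]) = m := by simp [jW_replicate_a_append, jW_cons_b]
    rw [h₂, hk, hj]
    push_cast
    ring
  · simp

/-- For `r ≥ 2`: `∇(a b^{r-1}) = Σ_{w ∈ W_r} c^±(w) · w`, the sum being over all
words of length `r`. -/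
theorem statement9 (r : ℕ) (hr : 2 ≤ r) :
    nablaOp (Letter.a :: List.replicate (r - 1) Letter.b) =
      ((wordsOfLength r).map fun w => Finsupp.single w ((cpmcoef r w : ℚ))).sum := by
  obtain ⟨m, rfl⟩ : ∃ m, r = m + 1 := ⟨r - 1, by omega⟩
  change _ = wordSum (m + 1) _
  rw [Nat.add_sub_cancel, nablaOp_a_replicate_b, tauH_a_replicate_b]
  ext w
  simp only [Finsupp.add_apply, wordSum_apply, single_apply, cpmcoef_succ]
  by_cases hw : w.length = m + 1
  · simp only [hw, if_true, eq_comm]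
  · have h₁ : List.replicate (m + 1) a ≠ w := fun h => hw (h ▸ List.length_replicate ..)
    have h₂ : List.replicate m a ++ [b] ≠ w := fun h => hw (h ▸ by simp)
    simp [h₁, h₂, hw]
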